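/- (Korovkin theorem for periodic functions via P-statistical convergence.) Let P be a regular power series method and let (G_j) be a sequence of positive linear operators from C_{2π}(ℝ) into B(ℝ). Then st_P-lim_{j→∞} ‖G_j(ψ) − ψ‖ = 0 holds for every ψ ∈ C_{2π}(ℝ) if and only if st_P-lim_{j→∞} ‖G_j(ψ_λ) − ψ_λ‖ = 0 for λ = 1, 2, 3, where ψ_1(y) = 1, ψ_2(y) = cos y, ψ_3(y) = sin y, and ‖·‖ is the sup norm on B(ℝ). -/

import Mathlib

open Filter Topology
open scoped ENNReal

/-- A power series method `P`: a sequence `(s j)` of nonnegative reals with `s 0 > 0`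
whose power series `s(t) = ∑ s j * t ^ j` has radius of convergence `R`, `0 < R ≤ ∞`. -/
structure PowerSeriesMethod where
  s : ℕ → ℝ
  s_nonneg : ∀ j, 0 ≤ s j
  s0_pos : 0 < s 0
  R : ℝ≥0∞
  R_pos : 0 < R
  summable_of_lt : ∀ t : ℝ, 0 < t → ENNReal.ofReal t < R → Summable fun j => s j * t ^ j
  not_summable_of_gt : ∀ t : ℝ, R < ENNReal.ofReal t → ¬ Summable fun j => s j * t ^ j

namespace PowerSeriesMethod

/-- The filter of `t` tending to `R` from the left (through `0 < t < R`);
if `R = ∞` this is `atTop`. -/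
noncomputable def limFilter (P : PowerSeriesMethod) : Filter ℝ :=
  if P.R = ⊤ then Filter.atTop else nhdsWithin P.R.toReal (Set.Ioo 0 P.R.toReal)

/-- `s(t) = ∑ s j t ^ j`. -/
noncomputable def sum (P : PowerSeriesMethod) (t : ℝ) : ℝ := ∑' j, P.s j * t ^ j

/-- The quotient `(∑_{j ∈ E} s j t ^ j) / s(t)` whose limit as `t → R⁻` is the `P`-density. -/
noncomputable def densityFn (P : PowerSeriesMethod) (E : Set ℕ) (t : ℝ) : ℝ :=
  (∑' j, Set.indicator E (fun j => P.s j * t ^ j) j) / P.sum t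

/-- `E ⊆ ℕ` has `P`-density `d`. -/
def HasDensity (P : PowerSeriesMethod) (E : Set ℕ) (d : ℝ) : Prop :=
  Tendsto (P.densityFn E) P.limFilter (𝓝 d)

/-- The power series method `P` is regular. -/
def Regular (P : PowerSeriesMethod) : Prop :=
  ∀ j, Tendsto (fun t => P.s j * t ^ j / P.sum t) P.limFilter (𝓝 0)

/-- The sequence `x` is `P`-statistically convergent to `L`. -/
def StatTendsto (P : PowerSeriesMethod) (x : ℕ → ℝ) (L : ℝ) : Prop :=
  ∀ ε : ℝ, 0 < ε → P.HasDensity {j | ε ≤ |x j - L|} 0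

end PowerSeriesMethod

/-- The space `C_{2π}(ℝ)` of `2π`-periodic continuous functions, as a submodule of `C(ℝ, ℝ)`. -/
noncomputable def C2pi : Submodule ℝ C(ℝ, ℝ) where
  carrier := {f : C(ℝ, ℝ) | Function.Periodic f (2 * Real.pi)}
  add_mem' := fun hf hg x => by simp [hf x, hg x]
  zero_mem' := fun x => by simp
  smul_mem' := fun c f hf x => by simp [hf x]

/-- The constant function `1` as an element of `C_{2π}(ℝ)`. -/
noncomputable def onePer : C2pi := ⟨1, fun x => rfl⟩

/-- `cos` as an element of `C_{2π}(ℝ)`. -/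
noncomputable def cosPer : C2pi := ⟨⟨Real.cos, Real.continuous_cos⟩, Real.cos_periodic⟩

/-- `sin` as an element of `C_{2π}(ℝ)`. -/
noncomputable def sinPer : C2pi := ⟨⟨Real.sin, Real.continuous_sin⟩, Real.sin_periodic⟩

/-!
Given `ψ ∈ C_{2π}(ℝ)` and `ε > 0`, uniform continuity and boundedness of `ψ` give `K` with
`|ψ y - ψ x| ≤ ε + K (1 - cos (y - x))` for all `x, y`. Since
`1 - cos (y - x) = 1 - cos x cos y - sin x sin y` is a combination of the test functions,
positivity and linearity of `G_j` turn this into, for some `M`,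
`‖G_j ψ - ψ‖ ≤ ε + M (‖G_j 1 - 1‖ + ‖G_j cos - cos‖ + ‖G_j sin - sin‖)`, and sets of
`P`-density zero are closed under subsets and finite unions.
-/

open Function Real

namespace PowerSeriesMethod

variable (P : PowerSeriesMethod)

lemma eventually_pos_ofReal_lt_R : ∀ᶠ t in P.limFilter, 0 < t ∧ ENNReal.ofReal t < P.R := by
  unfold limFilter
  split_ifs with h
  · filter_upwards [eventually_gt_atTop 0] with t ht
    exact ⟨ht, h ▸ ENNReal.ofReal_lt_top⟩
  · filter_upwards [self_mem_nhdsWithin] with t ht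
    exact ⟨ht.1, (ENNReal.ofReal_lt_iff_lt_toReal ht.1.le h).mpr ht.2⟩

section Density

variable {P} {t : ℝ}

lemma sum_pos (ht : 0 < t) (hR : ENNReal.ofReal t < P.R) : 0 < P.sum t := by
  have hle : P.s 0 ≤ P.sum t := by
    simpa [sum] using (P.summable_of_lt t ht hR).le_tsum 0
      fun j _ => mul_nonneg (P.s_nonneg j) (pow_nonneg ht.le j)
  exact P.s0_pos.trans_le hle

lemma densityFn_nonneg (ht : 0 < t) (hR : ENNReal.ofReal t < P.R) (E : Set ℕ) :
    0 ≤ P.densityFn E t :=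
  div_nonneg (tsum_nonneg fun _ => Set.indicator_nonneg
    (fun j _ => mul_nonneg (P.s_nonneg j) (pow_nonneg ht.le j)) _) (sum_pos ht hR).le

lemma densityFn_mono (ht : 0 < t) (hR : ENNReal.ofReal t < P.R) {E F : Set ℕ} (hEF : E ⊆ F) :
    P.densityFn E t ≤ P.densityFn F t := by
  have hsum := P.summable_of_lt t ht hR
  refine div_le_div_of_nonneg_right ?_ (sum_pos ht hR).le
  exact (hsum.indicator E).tsum_le_tsum (Set.indicator_le_indicator_of_subset hEF
    fun j => mul_nonneg (P.s_nonneg j) (pow_nonneg ht.le j)) (hsum.indicator F)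

lemma densityFn_union_le (ht : 0 < t) (hR : ENNReal.ofReal t < P.R) (E F : Set ℕ) :
    P.densityFn (E ∪ F) t ≤ P.densityFn E t + P.densityFn F t := by
  have hsum := P.summable_of_lt t ht hR
  have hpoint : ∀ j, (E ∪ F).indicator (fun j => P.s j * t ^ j) j ≤
      E.indicator (fun j => P.s j * t ^ j) j + F.indicator (fun j => P.s j * t ^ j) j := by
    intro j
    rw [← Set.indicator_union_add_inter_apply]
    exact le_add_of_nonneg_right (Set.indicator_nonneg
      (fun j _ => mul_nonneg (P.s_nonneg j) (pow_nonneg ht.le j)) j)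
  rw [densityFn, densityFn, densityFn, ← add_div, ← (hsum.indicator E).tsum_add (hsum.indicator F)]
  exact div_le_div_of_nonneg_right ((hsum.indicator _).tsum_le_tsum hpoint
    ((hsum.indicator E).add (hsum.indicator F))) (sum_pos ht hR).le

end Density

variable {P}

lemma HasDensity.zero_of_subset {E F : Set ℕ} (hF : P.HasDensity F 0) (hEF : E ⊆ F) :
    P.HasDensity E 0 := by
  refine squeeze_zero' ?_ ?_ hF
  · filter_upwards [P.eventually_pos_ofReal_lt_R] with t ht using densityFn_nonneg ht.1 ht.2 E
  · filter_upwards [P.eventually_pos_ofReal_lt_R] with t ht using densityFn_mono ht.1 ht.2 hEF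

lemma HasDensity.union_zero {E F : Set ℕ} (hE : P.HasDensity E 0) (hF : P.HasDensity F 0) :
    P.HasDensity (E ∪ F) 0 := by
  refine squeeze_zero' ?_ ?_ (by simpa using hE.add hF)
  · filter_upwards [P.eventually_pos_ofReal_lt_R] with t ht using densityFn_nonneg ht.1 ht.2 _
  · filter_upwards [P.eventually_pos_ofReal_lt_R] with t ht using densityFn_union_le ht.1 ht.2 E F

variable {x y : ℕ → ℝ} {L L' : ℝ}

lemma StatTendsto.add (hx : P.StatTendsto x L) (hy : P.StatTendsto y L') :
    P.StatTendsto (x + y) (L + L') := by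
  intro ε hε
  refine ((hx _ (half_pos hε)).union_zero (hy _ (half_pos hε))).zero_of_subset fun j hj => ?_
  by_contra! hj'
  simp only [Set.mem_union, Set.mem_ofPred_eq, not_or, not_le] at hj hj'
  rw [Pi.add_apply, add_sub_add_comm] at hj
  linarith [abs_add_le (x j - L) (y j - L')]

lemma StatTendsto.const_mul (hx : P.StatTendsto x L) (c : ℝ) :
    P.StatTendsto (fun j => c * x j) (c * L) := by
  intro ε hε
  have hc : 0 < |c| + 1 := by positivity
  refine (hx _ (div_pos hε hc)).zero_of_subset fun j hj => ?_
  by_contra! hj'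
  simp only [Set.mem_ofPred_eq, not_le, lt_div_iff₀ hc] at hj hj'
  rw [← mul_sub, abs_mul] at hj
  nlinarith [abs_nonneg c, abs_nonneg (x j - L)]

lemma statTendsto_zero_of_forall_abs_le_add
    (h : ∀ ε > 0, ∃ b : ℕ → ℝ, P.StatTendsto b 0 ∧ ∀ j, |x j| ≤ ε + b j) :
    P.StatTendsto x 0 := by
  intro ε hε
  obtain ⟨b, hb, hxb⟩ := h (ε / 2) (half_pos hε)
  refine (hb _ (half_pos hε)).zero_of_subset fun j hj => ?_
  by_contra! hj'
  simp only [Set.mem_ofPred_eq, sub_zero, not_le] at hj hj'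
  linarith [hxb j, le_abs_self (b j)]

end PowerSeriesMethod

lemma Function.Periodic.uniformContinuous_of_continuous {α : Type*} [UniformSpace α]
    {f : ℝ → α} {c : ℝ} (hp : Periodic f c) (hc : c ≠ 0) (hf : Continuous f) :
    UniformContinuous f := by
  have hp' : Periodic f |c| := by
    rcases abs_choice c with h | h <;> rw [h]
    exacts [hp, hp.neg]
  have : Fact (0 < |c|) := ⟨abs_pos.mpr hc⟩
  have hlift : UniformContinuous (fun x : AddCircle |c| => hp'.lift x) :=
    CompactSpace.uniformContinuous_of_continuous (continuous_quot_lift _ hf)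
  exact hlift.comp (uniformContinuous_of_continuousAt_zero (QuotientAddGroup.mk' _)
    continuous_quotient_mk'.continuousAt)

lemma Function.Periodic.exists_forall_abs_le {f : ℝ → ℝ} {c : ℝ} (hp : Periodic f c)
    (hc : c ≠ 0) (hf : Continuous f) : ∃ M, ∀ x, |f x| ≤ M := by
  obtain ⟨M, hM⟩ := (hp.isBounded_of_continuous hc hf).exists_norm_le
  exact ⟨M, fun x => hM (f x) ⟨x, rfl⟩⟩

/-- Away from `y ≡ x (mod 2π)` the term `K (1 - cos (y - x))` dominates `2 sup |f|`;
near it, uniform continuity gives `ε`. -/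
lemma Function.Periodic.exists_abs_sub_le_add_mul_one_sub_cos {f : ℝ → ℝ}
    (hp : Periodic f (2 * π)) (hf : Continuous f) {ε : ℝ} (hε : 0 < ε) :
    ∃ K, 0 ≤ K ∧ ∀ x y, |f y - f x| ≤ ε + K * (1 - cos (y - x)) := by
  obtain ⟨M, hfM⟩ := hp.exists_forall_abs_le two_pi_pos.ne' hf
  obtain ⟨δ, hδ, hfδ⟩ := Metric.uniformContinuous_iff.mp
    (hp.uniformContinuous_of_continuous two_pi_pos.ne' hf) ε hε
  set η := min δ π
  have hη : 0 < η := lt_min hδ pi_pos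
  have hcosη : cos η < 1 := by
    simpa using cos_lt_cos_of_nonneg_of_le_pi le_rfl (min_le_right δ π) hη
  have hM0 : 0 ≤ M := (abs_nonneg _).trans (hfM 0)
  have hK0 : 0 ≤ 2 * M / (1 - cos η) := div_nonneg (by linarith) (by linarith)
  refine ⟨2 * M / (1 - cos η), hK0, fun x y => ?_⟩
  obtain ⟨n, u, hu, hnu⟩ : ∃ (n : ℤ) (u : ℝ), u ∈ Set.Ioc (-π) π ∧ y - x - n • (2 * π) = u := by
    have hmem := toIocMod_mem_Ioc two_pi_pos (-π) (y - x)
    rw [show -π + 2 * π = π by ring] at hmem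
    exact ⟨_, _, hmem, self_sub_toIocDiv_zsmul two_pi_pos (-π) (y - x)⟩
  have hfy : f y = f (x + u) := by rw [← hnu, ← hp.sub_zsmul_eq n]; ring_nf
  have hcos : cos (y - x) = cos u := by rw [← hnu, cos_periodic.sub_zsmul_eq]
  by_cases hsmall : |u| < η
  · have hclose : |f (x + u) - f x| < ε := by
      simpa [Real.dist_eq] using hfδ (a := x + u) (b := x)
        (by simpa [Real.dist_eq] using hsmall.trans_le (min_le_left δ π))
    have : 0 ≤ 2 * M / (1 - cos η) * (1 - cos (y - x)) :=
      mul_nonneg hK0 (by linarith [cos_le_one (y - x)])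
    rw [hfy]; linarith
  · have hcosu : cos u ≤ cos η := by
      rw [← cos_abs u]
      exact cos_le_cos_of_nonneg_of_le_pi hη.le (abs_le.mpr ⟨hu.1.le, hu.2⟩) (not_lt.mp hsmall)
    have hK : 2 * M ≤ 2 * M / (1 - cos η) * (1 - cos (y - x)) := by
      rw [hcos, div_mul_eq_mul_div, le_div_iff₀ (by linarith)]
      exact mul_le_mul_of_nonneg_left (by linarith) (by linarith)
    linarith [abs_sub (f y) (f x), hfM x, hfM y]

lemma abs_apply_le_of_forall_abs_le {S : Submodule ℝ C(ℝ, ℝ)} (G : S →ₗ[ℝ] (ℝ → ℝ))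
    (hG : ∀ f : S, (∀ x, 0 ≤ (f : C(ℝ, ℝ)) x) → ∀ x, 0 ≤ G f x)
    {f g : S} (hfg : ∀ y, |(f : C(ℝ, ℝ)) y| ≤ (g : C(ℝ, ℝ)) y) (x : ℝ) : |G f x| ≤ G g x := by
  have hsub := hG (g - f) (fun y => by simpa using (abs_le.mp (hfg y)).2) x
  have hadd := hG (g + f)
    (fun y => by simpa [neg_le_iff_add_nonneg'] using (abs_le.mp (hfg y)).1) x
  simp only [map_sub, map_add, Pi.sub_apply, Pi.add_apply] at hsub hadd
  exact abs_le.mpr ⟨by linarith, by linarith⟩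

@[simp] lemma onePer_apply (x : ℝ) : (onePer : C(ℝ, ℝ)) x = 1 := rfl
@[simp] lemma cosPer_apply (x : ℝ) : (cosPer : C(ℝ, ℝ)) x = cos x := rfl
@[simp] lemma sinPer_apply (x : ℝ) : (sinPer : C(ℝ, ℝ)) x = sin x := rfl

lemma abs_apply_sub_le_korovkin (G : C2pi →ₗ[ℝ] (ℝ → ℝ))
    (hG : ∀ f : C2pi, (∀ x, 0 ≤ (f : C(ℝ, ℝ)) x) → ∀ x, 0 ≤ G f x)
    {f : C2pi} {ε K M : ℝ} (hε : 0 ≤ ε) (hK : 0 ≤ K) (hM : ∀ x, |(f : C(ℝ, ℝ)) x| ≤ M)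
    (hf : ∀ x y, |(f : C(ℝ, ℝ)) y - (f : C(ℝ, ℝ)) x| ≤ ε + K * (1 - cos (y - x))) (x : ℝ) :
    |G f x - (f : C(ℝ, ℝ)) x| ≤ ε + (ε + K + M) *
      (|G onePer x - 1| + |G cosPer x - cos x| + |G sinPer x - sin x|) := by
  set fx := (f : C(ℝ, ℝ)) x
  set e₁ := G onePer x - 1
  set e₂ := G cosPer x - cos x
  set e₃ := G sinPer x - sin x
  have hmain := abs_apply_le_of_forall_abs_le G hG
    (f := f - fx • onePer) (g := ε • onePer + K • (onePer - cos x • cosPer - sin x • sinPer))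
    (fun y => by
      have hfxy := hf x y
      rw [cos_sub] at hfxy
      simp only [Submodule.coe_sub, Submodule.coe_add, Submodule.coe_smul, ContinuousMap.sub_apply,
        ContinuousMap.add_apply, ContinuousMap.smul_apply, onePer_apply, cosPer_apply,
        sinPer_apply, smul_eq_mul, mul_one]
      convert hfxy using 1
      ring) x
  simp only [map_sub, map_add, map_smul, Pi.sub_apply, Pi.add_apply, Pi.smul_apply,
    smul_eq_mul] at hmain
  -- `cos² x + sin² x = 1` recentres the majorant at the test-function errors.
  have hmajorant : ε * G onePer x + K * (G onePer x - cos x * G cosPer x - sin x * G sinPer x) =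
      ε + (ε + K) * e₁ - K * (cos x * e₂) - K * (sin x * e₃) := by
    linear_combination (-K) * sin_sq_add_cos_sq x
  have h₂ : -(cos x * e₂) ≤ |e₂| := (neg_le_abs _).trans
    (by rw [abs_mul]; exact mul_le_of_le_one_left (abs_nonneg _) (abs_cos_le_one x))
  have h₃ : -(sin x * e₃) ≤ |e₃| := (neg_le_abs _).trans
    (by rw [abs_mul]; exact mul_le_of_le_one_left (abs_nonneg _) (abs_sin_le_one x))
  have h₁ : (ε + K) * e₁ ≤ (ε + K) * |e₁| :=
    mul_le_mul_of_nonneg_left (le_abs_self e₁) (by positivity)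
  have hfe₁ : |fx * e₁| ≤ M * |e₁| := by
    rw [abs_mul]; exact mul_le_mul_of_nonneg_right (hM x) (abs_nonneg e₁)
  have hsplit : G f x - fx = (G f x - fx * G onePer x) + fx * e₁ := by ring
  have hM0 : 0 ≤ M := (abs_nonneg _).trans (hM x)
  calc |G f x - fx| ≤ |G f x - fx * G onePer x| + |fx * e₁| := hsplit ▸ abs_add_le _ _
    _ ≤ ε + (ε + K) * |e₁| + K * |e₂| + K * |e₃| + M * |e₁| := by
      linarith [mul_le_mul_of_nonneg_left h₂ hK, mul_le_mul_of_nonneg_left h₃ hK]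
    _ ≤ ε + (ε + K + M) * (|e₁| + |e₂| + |e₃|) := by
      linarith [mul_nonneg (add_nonneg hε hM0) (add_nonneg (abs_nonneg e₂) (abs_nonneg e₃))]

lemma abs_sub_le_iSup_abs_sub {F g : ℝ → ℝ} (hF : ∃ K, ∀ x, |F x| ≤ K) (hg : ∃ K, ∀ x, |g x| ≤ K)
    (x : ℝ) : |F x - g x| ≤ ⨆ y, |F y - g y| := by
  obtain ⟨K₁, hK₁⟩ := hF
  obtain ⟨K₂, hK₂⟩ := hg
  refine le_ciSup (f := fun y => |F y - g y|) ⟨K₁ + K₂, ?_⟩ x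
  rintro _ ⟨y, rfl⟩
  exact (abs_sub _ _).trans (add_le_add (hK₁ y) (hK₂ y))

theorem periodic_korovkin_pstat_general (P : PowerSeriesMethod)
    (G : ℕ → C2pi →ₗ[ℝ] (ℝ → ℝ))
    (hGb : ∀ j (f : C2pi), ∃ K : ℝ, ∀ x : ℝ, |G j f x| ≤ K)
    (hGpos : ∀ j (f : C2pi), (∀ x : ℝ, 0 ≤ (f : C(ℝ, ℝ)) x) → ∀ x : ℝ, 0 ≤ G j f x) :
    (∀ f : C2pi, P.StatTendsto (fun j => ⨆ x : ℝ, |G j f x - (f : C(ℝ, ℝ)) x|) 0) ↔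
      (P.StatTendsto (fun j => ⨆ x : ℝ, |G j onePer x - 1|) 0 ∧
       P.StatTendsto (fun j => ⨆ x : ℝ, |G j cosPer x - Real.cos x|) 0 ∧
       P.StatTendsto (fun j => ⨆ x : ℝ, |G j sinPer x - Real.sin x|) 0) := by
  refine ⟨fun h => ⟨by simpa using h onePer, by simpa using h cosPer, by simpa using h sinPer⟩,
    fun ⟨h₁, h₂, h₃⟩ f => PowerSeriesMethod.statTendsto_zero_of_forall_abs_le_add fun ε hε => ?_⟩
  obtain ⟨M, hfM⟩ := f.2.exists_forall_abs_le two_pi_pos.ne' (map_continuous _)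
  obtain ⟨K, hK, hfK⟩ := f.2.exists_abs_sub_le_add_mul_one_sub_cos (map_continuous _) hε
  refine ⟨_, by simpa using ((h₁.add h₂).add h₃).const_mul (ε + K + M), fun j => ?_⟩
  rw [abs_of_nonneg (Real.iSup_nonneg fun _ => abs_nonneg _)]
  refine ciSup_le fun x => (abs_apply_sub_le_korovkin (G j) (hGpos j) hε.le hK hfM hfK x).trans ?_
  gcongr
  · linarith [(abs_nonneg _).trans (hfM 0)]
  · exact abs_sub_le_iSup_abs_sub (g := fun _ => 1) (hGb j onePer) ⟨1, fun _ => by simp⟩ x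
  · exact abs_sub_le_iSup_abs_sub (hGb j cosPer) ⟨1, abs_cos_le_one⟩ x
  · exact abs_sub_le_iSup_abs_sub (hGb j sinPer) ⟨1, abs_sin_le_one⟩ x

/-- Korovkin theorem for periodic functions via `P`-statistical convergence:
for positive linear operators `G_j` from `C_{2π}(ℝ)` into `B(ℝ)` (bounded functions with the
sup norm), `st_P-lim ‖G_j ψ − ψ‖ = 0` for every `ψ ∈ C_{2π}(ℝ)` iff it holds for the three
test functions `1`, `cos`, `sin`. -/
theorem periodic_korovkin_pstat (P : PowerSeriesMethod) (hP : P.Regular)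
    (G : ℕ → C2pi →ₗ[ℝ] (ℝ → ℝ))
    (hGb : ∀ j (f : C2pi), ∃ K : ℝ, ∀ x : ℝ, |G j f x| ≤ K)
    (hGpos : ∀ j (f : C2pi), (∀ x : ℝ, 0 ≤ (f : C(ℝ, ℝ)) x) → ∀ x : ℝ, 0 ≤ G j f x) :
    (∀ f : C2pi, P.StatTendsto (fun j => ⨆ x : ℝ, |G j f x - (f : C(ℝ, ℝ)) x|) 0) ↔
      (P.StatTendsto (fun j => ⨆ x : ℝ, |G j onePer x - 1|) 0 ∧
       P.StatTendsto (fun j => ⨆ x : ℝ, |G j cosPer x - Real.cos x|) 0 ∧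
       P.StatTendsto (fun j => ⨆ x : ℝ, |G j sinPer x - Real.sin x|) 0) :=
  periodic_korovkin_pstat_general P G hGb hGpos
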